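/- Let λ ≥ 1/2 and define U^λ : [0,1] × ℝ → ℝ by U^λ(x,y) = (1/2)e^{1-2λ}(y² - x² + x) if |y| ≤ min(x, 1-x); = (1/2)x·exp(2|y| - 2x - 2λ + 1) if 0 ≤ x ≤ 1/2 and x < |y| < x + λ - 1/2; = (1/2)(1-x)·exp(2|y| + 2x - 2λ - 1) if 1/2 < x ≤ 1 and 1 < x + |y| < λ + 1/2; = (1/2)[(|y| - λ + 1/2)² - x² + x] otherwise. Then for all (x,y) ∈ [0,1] × ℝ, U^λ(x,y) ≥ (|y| - λ)_+ · (1 - x). -/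

import Mathlib

/-!
On the first three branches of `Ubig` one has `|y| < l`, so the right-hand side vanishes and the
branch is visibly nonnegative. On the last branch, with `s = |y| - l`, the gap is
`((s - 1/2)^2 + x * (2 * s + 1 - x)) / 2` when `s ≥ 0`.
-/

noncomputable def Ubig (l : ℝ) (x y : ℝ) : ℝ :=
  if |y| ≤ min x (1 - x) then (1/2) * Real.exp (1 - 2*l) * (y^2 - x^2 + x)
  else if 0 ≤ x ∧ x ≤ 1/2 ∧ x < |y| ∧ |y| < x + l - 1/2 then
    (1/2) * x * Real.exp (2*|y| - 2*x - 2*l + 1)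
  else if 1/2 < x ∧ x ≤ 1 ∧ 1 < x + |y| ∧ x + |y| < l + 1/2 then
    (1/2) * (1 - x) * Real.exp (2*|y| + 2*x - 2*l - 1)
  else (1/2) * ((|y| - l + 1/2)^2 - x^2 + x)

theorem max_zero_mul_one_sub_le_half_sq {s x : ℝ} (hx0 : 0 ≤ x) (hx1 : x ≤ 1) :
    max s 0 * (1 - x) ≤ (1/2) * ((s + 1/2)^2 - x^2 + x) := by
  have hx : 0 ≤ x * (1 - x) := mul_nonneg hx0 (sub_nonneg.2 hx1)
  rcases le_total s 0 with hs | hs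
  · rw [max_eq_right hs, zero_mul]
    nlinarith [sq_nonneg (s + 1/2)]
  · rw [max_eq_left hs]
    nlinarith [sq_nonneg (s - 1/2), mul_nonneg hx0 hs]

theorem Ubig_majorization (l : ℝ) (hl : 1/2 ≤ l) :
    ∀ x y : ℝ, x ∈ Set.Icc (0:ℝ) 1 →
      Ubig l x y ≥ max (|y| - l) 0 * (1 - x) := by
  rintro x y ⟨hx0, hx1⟩
  have hx : 0 ≤ 1 - x := sub_nonneg.2 hx1
  unfold Ubig
  split_ifs with hcenter hleft hright
  · have hy : |y| ≤ l := by linarith [min_le_left x (1 - x), min_le_right x (1 - x)]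
    rw [max_eq_right (sub_nonpos.2 hy), zero_mul]
    exact mul_nonneg (by positivity) (by nlinarith [sq_nonneg y, mul_nonneg hx0 hx])
  · rw [max_eq_right (by linarith), zero_mul]
    positivity
  · rw [max_eq_right (by linarith), zero_mul]
    exact mul_nonneg (mul_nonneg (by norm_num) hx) (Real.exp_pos _).le
  · exact max_zero_mul_one_sub_le_half_sq hx0 hx1
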